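/- Let L be a first-order language, U a unary predicate symbol not in L, L(U) = L ∪ {U}, and let T_U be an L(U)-theory with a model M that is κ-saturated for some κ > |L(U)| + ℵ₀. Let (a_i)_{i∈ω} be an indiscernible sequence of elements of M such that there are i₀ < i in ω with a_i ∈ dcl_L(U(M) ∪ {a_0,…,a_{i₀}}). Then there exist m ∈ ℕ, a function f : M^m → M whose graph is definable in M with parameters among a_0,…,a_{i₀}, and an indiscernible sequence (g⃗_i)_{i>i₀} of m-tuples such that for every i > i₀ we have g⃗_i ∈ U(M)^m and f(g⃗_i) = a_i. -/

import Mathlib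

open FirstOrder FirstOrder.Language FirstOrder.Language.Structure Cardinal Set

namespace PaperDep

/-- The language with a single unary relation symbol `U`. -/
def unaryRelLang : FirstOrder.Language.{0, 0} :=
  ⟨fun _ => Empty, fun n => match n with | 1 => PUnit | _ => Empty⟩

/-- Interpreting the unary relation symbol `U` as membership in `B`. -/
def unaryRelStructure (M : Type*) (B : Set M) : unaryRelLang.Structure M where
  funMap := fun {_} f _ => Empty.elim f
  RelMap := fun {n} r x =>
    match n, r with
    | 1, _ => x 0 ∈ B
    | 0, r => Empty.elim r
    | (_ + 2), r => Empty.elim r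

/-- The language with a single unary function symbol `𝔣`. -/
def unaryFunLang : FirstOrder.Language.{0, 0} :=
  ⟨fun n => match n with | 1 => PUnit | _ => Empty, fun _ => Empty⟩

/-- Interpreting the unary function symbol `𝔣` as the function `F`. -/
def unaryFunStructure (M : Type*) (F : M → M) : unaryFunLang.Structure M where
  funMap := fun {n} f x =>
    match n, f with
    | 1, _ => F (x 0)
    | 0, f => Empty.elim f
    | (_ + 2), f => Empty.elim f
  RelMap := fun {_} r _ => Empty.elim r

/-- The language `L(U)`. -/
def LU (L : FirstOrder.Language.{0, 0}) : FirstOrder.Language.{0, 0} := L.sum unaryRelLang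

/-- The `L(U)`-structure on `M` given by an `L`-structure together with the
interpretation `B` of the predicate `U`. -/
def LUStructure (L : FirstOrder.Language.{0, 0}) (M : Type*) [L.Structure M] (B : Set M) :
    (LU L).Structure M :=
  letI := unaryRelStructure M B
  Language.sumStructure L unaryRelLang M

/-- The language `L(𝔣)`. -/
def LF (L : FirstOrder.Language.{0, 0}) : FirstOrder.Language.{0, 0} := L.sum unaryFunLang

/-- The `L(𝔣)`-structure on `M` given by an `L`-structure together with the
interpretation `F` of the function symbol `𝔣`. -/
def LFStructure (L : FirstOrder.Language.{0, 0}) (M : Type*) [L.Structure M] (F : M → M) :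
    (LF L).Structure M :=
  letI := unaryFunStructure M F
  Language.sumStructure L unaryFunLang M

/-- `(a⃗ᵢ)_{i ∈ ω}` is an indiscernible sequence of `p`-tuples from `M`. -/
def IsIndiscernible (L : FirstOrder.Language) {M : Type*} [L.Structure M] {p : ℕ}
    (a : ℕ → Fin p → M) : Prop :=
  ∀ (k : ℕ) (φ : L.Formula (Fin k × Fin p)) (i j : Fin k → ℕ),
    StrictMono i → StrictMono j →
      (φ.Realize (fun v => a (i v.1) v.2) ↔ φ.Realize (fun v => a (j v.1) v.2))

/-- `(a⃗ᵢ)_{i ∈ ω}` is an indiscernible sequence of `p`-tuples over the tuple `b⃗`. -/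
def IsIndiscernibleOver (L : FirstOrder.Language) {M : Type*} [L.Structure M] {p q : ℕ}
    (a : ℕ → Fin p → M) (b : Fin q → M) : Prop :=
  ∀ (k : ℕ) (φ : L.Formula ((Fin k × Fin p) ⊕ Fin q)) (i j : Fin k → ℕ),
    StrictMono i → StrictMono j →
      (φ.Realize (Sum.elim (fun v => a (i v.1) v.2) b) ↔
        φ.Realize (Sum.elim (fun v => a (j v.1) v.2) b))

/-- A theory is dependent (NIP) if in every model, every formula `φ(x⃗,y⃗)`, every
indiscernible sequence `(a⃗ᵢ)` and parameter tuple `b⃗` yield a finite or cofinite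
set `{i : φ(a⃗ᵢ, b⃗)}`. -/
def Dependent {L : FirstOrder.Language.{0, 0}} (T : L.Theory) : Prop :=
  ∀ (M : Type) [L.Structure M], T.Model M →
    ∀ (p q : ℕ) (φ : L.Formula (Fin p ⊕ Fin q)) (a : ℕ → Fin p → M) (b : Fin q → M),
      IsIndiscernible L a →
        ({i : ℕ | φ.Realize (Sum.elim (a i) b)}.Finite ∨
          {i : ℕ | ¬ φ.Realize (Sum.elim (a i) b)}.Finite)

/-- `M` is `κ`-saturated: every finitely satisfiable set of formulas with parameters from
a subset of `M` of size `< κ` and with fewer than `κ` free variables is realized in `M`. -/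
def IsSaturated (L : FirstOrder.Language.{0, 0}) (M : Type) [L.Structure M]
    (κ : Cardinal.{0}) : Prop :=
  ∀ (α : Type), #α < κ → ∀ A : Set M, #A < κ →
    ∀ S : Set (L.Formula (α ⊕ A)),
      (∀ s : Finset (L.Formula (α ⊕ A)), ↑s ⊆ S →
        ∃ v : α → M, ∀ φ ∈ s, φ.Realize (Sum.elim v (Subtype.val : A → M))) →
      ∃ v : α → M, ∀ φ ∈ S, φ.Realize (Sum.elim v (Subtype.val : A → M))

/-- The definable closure of `X` in `M` (with respect to the language `L`):
the set of elements that are the unique realization of some `L`-formula with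
parameters from `X`. -/
def dclIn (L : FirstOrder.Language) (M : Type*) [L.Structure M] (X : Set M) : Set M :=
  {a | ∃ φ : L.Formula (X ⊕ Fin 1),
    φ.Realize (Sum.elim (Subtype.val : X → M) fun _ => a) ∧
      ∀ b : M, φ.Realize (Sum.elim (Subtype.val : X → M) fun _ => b) → b = a}

end PaperDep
namespace PaperDep

/-- A set is "interval-like" if it is an open interval, possibly with infinite endpoints. -/
def IsIntervalLike {M : Type*} [LinearOrder M] (u : Set M) : Prop :=
  (∃ a b : M, u = Set.Ioo a b) ∨ (∃ a : M, u = Set.Iio a) ∨ (∃ a : M, u = Set.Ioi a) ∨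
    u = Set.univ

/-- `s` is a finite union of points and open intervals. -/
def FinUnionPtsIntervals {M : Type*} [LinearOrder M] (s : Set M) : Prop :=
  ∃ (n : ℕ) (f : Fin n → Set M),
    (∀ i, (∃ a : M, f i = {a}) ∨ IsIntervalLike (f i)) ∧ s = ⋃ i, f i

/-- `s` is a finite union of open intervals. -/
def FinUnionIntervals {M : Type*} [LinearOrder M] (s : Set M) : Prop :=
  ∃ (n : ℕ) (f : Fin n → Set M), (∀ i, IsIntervalLike (f i)) ∧ s = ⋃ i, f i

/-- `s` is open in the order topology. -/
def OrderOpen {M : Type*} [LinearOrder M] (s : Set M) : Prop :=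
  ∀ x ∈ s, ∃ u : Set M, IsIntervalLike u ∧ x ∈ u ∧ u ⊆ s

/-- The distinguished order symbol of `L` is interpreted as the order of `M`. -/
def OrdCompat (L : FirstOrder.Language) [L.IsOrdered] (M : Type*) [L.Structure M] [LE M] :
    Prop :=
  ∀ x y : M, Structure.RelMap (leSymb : L.Relations 2) ![x, y] ↔ x ≤ y

/-- The linearly ordered `L`-structure `M` is o-minimal: every subset of `M` definable with
parameters is a finite union of points and open intervals. -/
def OMinimalStructure (L : FirstOrder.Language) (M : Type*) [L.Structure M] [LinearOrder M] :
    Prop :=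
  ∀ s : Set M, (Set.univ : Set M).Definable₁ L s → FinUnionPtsIntervals s

/-- The theory `T` (in an ordered language) is o-minimal: every model (with its linear order,
compatible with the order symbol of `L`) is o-minimal. -/
def OMinimalTheory (L : FirstOrder.Language.{0, 0}) [L.IsOrdered] (T : L.Theory) : Prop :=
  ∀ (M : Type) [L.Structure M] [LinearOrder M], OrdCompat L M → T.Model M →
    OMinimalStructure L M

/-- The theory `T` has quantifier elimination. -/
def HasQE {L : FirstOrder.Language} (T : L.Theory) : Prop :=
  ∀ (n : ℕ) (φ : L.Formula (Fin n)),
    ∃ ψ : L.Formula (Fin n), ψ.IsQF ∧ (φ ⇔[T] ψ)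

/-- The theory `T` has a universal axiomatization. -/
def HasUnivAx {L : FirstOrder.Language.{0, 0}} (T : L.Theory) : Prop :=
  ∃ T₀ : L.Theory, T₀.IsUniversal ∧ ∀ (M : Type) [L.Structure M], T.Model M ↔ T₀.Model M

/-- `L`-terms naming the operations of an (ordered) abelian group with a distinguished
element `1`. -/
structure AbGroupOps (L : FirstOrder.Language) where
  add : L.Term (Fin 2)
  neg : L.Term (Fin 1)
  zero : L.Term (Fin 0)
  one : L.Term (Fin 0)

/-- The terms of `ops` are interpreted in `M` as the group operations, and `1` is positive. -/
def AbGroupOps.Compat {L : FirstOrder.Language} (ops : AbGroupOps L) (M : Type*)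
    [L.Structure M] [AddCommGroup M] [LinearOrder M] [IsOrderedAddMonoid M] : Prop :=
  (∀ x y : M, ops.add.realize ![x, y] = x + y) ∧
    (∀ x : M, ops.neg.realize ![x] = -x) ∧
    ops.zero.realize (fun i : Fin 0 => i.elim0 : Fin 0 → M) = 0 ∧
    0 < ops.one.realize (fun i : Fin 0 => i.elim0 : Fin 0 → M)

/-- `L`-terms naming the operations of an ordered ring. -/
structure RingOps (L : FirstOrder.Language) where
  add : L.Term (Fin 2)
  mul : L.Term (Fin 2)
  neg : L.Term (Fin 1)
  zero : L.Term (Fin 0)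
  one : L.Term (Fin 0)

/-- The terms of `ops` are interpreted in `M` as the ring operations. -/
def RingOps.Compat {L : FirstOrder.Language} (ops : RingOps L) (M : Type*)
    [L.Structure M] [Field M] [LinearOrder M] [IsStrictOrderedRing M] : Prop :=
  (∀ x y : M, ops.add.realize ![x, y] = x + y) ∧
    (∀ x y : M, ops.mul.realize ![x, y] = x * y) ∧
    (∀ x : M, ops.neg.realize ![x] = -x) ∧
    ops.zero.realize (fun i : Fin 0 => i.elim0 : Fin 0 → M) = 0 ∧
    ops.one.realize (fun i : Fin 0 => i.elim0 : Fin 0 → M) = 1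

/-- An ordered field is real closed: nonnegative elements are squares and odd-degree
polynomials have roots. -/
def RealClosed (M : Type*) [Field M] [LinearOrder M] [IsStrictOrderedRing M] : Prop :=
  (∀ x : M, 0 ≤ x → ∃ y : M, y ^ 2 = x) ∧
    ∀ p : Polynomial M, Odd p.natDegree → ∃ x : M, p.eval x = 0

/-- `T` extends the theory of real closed ordered fields: in every model, the distinguished
symbols define the structure of a real closed ordered field. -/
def ExtendsRCF (L : FirstOrder.Language.{0, 0}) [L.IsOrdered] (ops : RingOps L)
    (T : L.Theory) : Prop :=
  ∀ (M : Type) [L.Structure M], T.Model M → Nonempty M →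
    ∃ (fld : Field M) (ord : LinearOrder M) (_ : IsStrictOrderedRing M),
      OrdCompat L M ∧ ops.Compat M ∧ RealClosed M

/-- `T` extends the theory of ordered abelian groups with a distinguished positive
element `1`. -/
def ExtendsOAG (L : FirstOrder.Language.{0, 0}) [L.IsOrdered] (ops : AbGroupOps L)
    (T : L.Theory) : Prop :=
  ∀ (M : Type) [L.Structure M], T.Model M → Nonempty M →
    ∃ (grp : AddCommGroup M) (ord : LinearOrder M) (_ : IsOrderedAddMonoid M),
      OrdCompat L M ∧ ops.Compat M

/-- `V` is a `T`-convex subring of the elementary substructure of `D` with underlying set `S`: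
a convex subring closed under all continuous `L`-∅-definable unary functions. -/
def IsTConvexSubring (L : FirstOrder.Language) {D : Type*} [L.Structure D]
    [Field D] [LinearOrder D] [IsStrictOrderedRing D] (S V : Set D) : Prop :=
  V ⊆ S ∧ (0 : D) ∈ V ∧ (1 : D) ∈ V ∧
    (∀ x ∈ V, ∀ y ∈ V, x + y ∈ V) ∧ (∀ x ∈ V, ∀ y ∈ V, x * y ∈ V) ∧ (∀ x ∈ V, -x ∈ V) ∧
    (∀ x ∈ V, ∀ z ∈ V, ∀ y ∈ S, x ≤ y → y ≤ z → y ∈ V) ∧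
    ∀ F : D → D,
      (∃ φ : L.Formula (Fin 2), ∀ x y : D, F x = y ↔ φ.Realize ![x, y]) →
      (∀ x ∈ S, F x ∈ S) →
      (∀ x ∈ S, ∀ ε ∈ S, 0 < ε → ∃ δ ∈ S, 0 < δ ∧ ∀ y ∈ S, |y - x| < δ → |F y - F x| < ε) →
      ∀ x ∈ V, F x ∈ V

/-- The maximal ideal (set of nonunits) of the convex subring `V`. -/
def maxIdealIn {D : Type*} [Field D] [LinearOrder D] [IsStrictOrderedRing D] (V : Set D) : Set D :=
  {x ∈ V | x = 0 ∨ x⁻¹ ∉ V}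

open Classical in
/-- Rational powers in an ordered field: `qpow c q` is the unique positive `y` with
`y ^ q.den = c ^ q.num`, when it exists (and `0` otherwise). -/
noncomputable def qpow {A : Type*} [Field A] [LinearOrder A] [IsStrictOrderedRing A] (c : A) (q : ℚ) : A :=
  if h : ∃ y : A, 0 < y ∧ y ^ (q.den : ℕ) = c ^ (q.num : ℤ) then h.choose else 0

/-- Boolean combinations of sets from the collection `G`. -/
inductive BoolComb {α : Type*} (G : Set (Set α)) : Set α → Prop
  | basic {s : Set α} : s ∈ G → BoolComb G s
  | compl {s : Set α} : BoolComb G s → BoolComb G sᶜ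
  | union {s t : Set α} : BoolComb G s → BoolComb G t → BoolComb G (s ∪ t)

end PaperDep
namespace PaperDep

/-- The language of ordered rings `{<, +, -, ·, 0, 1}`: constants `0, 1` (`Fin 2`),
a unary function `-`, binary functions `+, ·` (`Fin 2`), and a binary relation `<`. -/
def oRingLang : FirstOrder.Language.{0, 0} :=
  ⟨fun n => match n with | 0 => Fin 2 | 1 => PUnit | 2 => Fin 2 | _ => Empty,
    fun n => match n with | 2 => PUnit | _ => Empty⟩

/-- The standard interpretation of the language of ordered rings in `ℝ`. -/
def oRingStructureR : oRingLang.Structure ℝ where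
  funMap := fun {n} f x =>
    match n, f with
    | 0, f => ![(0 : ℝ), 1] f
    | 1, _ => -(x 0)
    | 2, f => ![x 0 + x 1, x 0 * x 1] f
    | (_ + 3), f => Empty.elim f
  RelMap := fun {n} r x =>
    match n, r with
    | 2, _ => x 0 < x 1
    | 0, r => Empty.elim r
    | 1, r => Empty.elim r
    | (_ + 3), r => Empty.elim r

/-- `F : M → M` is definable (with parameters) in the `L`-structure `M`. -/
def DefinableFun (L : FirstOrder.Language) (M : Type*) [L.Structure M] (F : M → M) : Prop :=
  (Set.univ : Set M).Definable L {x : Fin 2 → M | F (x 0) = x 1}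

/-- The `L`-structure `ℝ` is polynomially bounded. -/
def PolyBounded (L : FirstOrder.Language) [L.Structure ℝ] : Prop :=
  ∀ F : ℝ → ℝ, DefinableFun L ℝ F → ∃ (n : ℕ) (x₀ : ℝ), ∀ x : ℝ, x₀ ≤ x → |F x| ≤ x ^ n

/-- The `L`-structure `ℝ` has field of exponents `ℚ`. -/
def FieldOfExpQ (L : FirstOrder.Language) [L.Structure ℝ] : Prop :=
  ∀ F : ℝ → ℝ, DefinableFun L ℝ F →
    (∀ x y : ℝ, 0 < x → 0 < y → F (x * y) = F x * F y) →
    ∃ q : ℚ, ∀ x : ℝ, 0 < x → F x = x ^ (q : ℝ)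

open Classical in
/-- `lam x` is the unique `g ∈ 2^ℤ` with `g ≤ x < 2g` for `x > 0`, and `0` for `x ≤ 0`. -/
noncomputable def lam : ℝ → ℝ := fun x =>
  if h : ∃ k : ℤ, (2 : ℝ) ^ k ≤ x ∧ x < 2 * (2 : ℝ) ^ k then (2 : ℝ) ^ h.choose else 0

/-- The pure closure `H_G⟨g₁, …, g_m⟩` of the subgroup `H` together with `g₁, …, g_m`
inside the (multiplicatively written, torsion-free abelian) group `G`. -/
def pureClosure {A : Type*} [Field A] [LinearOrder A] [IsStrictOrderedRing A] (G H : Set A) {m : ℕ}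
    (g : Fin m → A) : Set A :=
  {x ∈ G | ∃ M₀ : ℕ, 0 < M₀ ∧ ∃ h ∈ H, ∃ k : Fin m → ℤ,
    x ^ M₀ = h * ∏ i, g i ^ k i}

end PaperDep

namespace PaperDep

/-!
Writing the `U(M)`-parameters of an `L`-formula that witnesses
`aᵢ ∈ dcl_L(U(M) ∪ {a₀, …, a_{i₀}})` as a tuple `u ∈ U(M)ᵐ` gives an `L`-formula `φ(x, y)` over
`a₀, …, a_{i₀}` such that `aᵢ` is the only solution of `φ(u, y)`; let `f x` be the only solution
of `φ(x, y)` when there is one. The tail `(aₙ)_{n > i₀}` is indiscernible over `a₀, …, a_{i₀}`,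
so every `aₙ` has a witness `hₙ ∈ U(M)ᵐ` of the same kind. By Ramsey's theorem a subsequence of
`(hₙ)` is indiscernible for any finitely many formulas, and indiscernibility of the tail moves
this back to the first `N` elements. Hence the type in the variables `(gₙ)` saying that
`gₙ ∈ U(M)ᵐ`, `aₙ` is the only solution of `φ(gₙ, y)`, and `(gₙ)` is indiscernible, is finitely
satisfiable; it has countably many variables and parameters, so saturation realizes it.
-/

section Ramsey

variable {C : Type*}

def IsHomogeneousAlong {k : ℕ} (f : (Fin k → ℕ) → C) (G : ℕ → ℕ) : Prop :=
  ∀ i j : Fin k → ℕ, StrictMono i → StrictMono j → f (G ∘ i) = f (G ∘ j)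

theorem IsHomogeneousAlong.comp {k : ℕ} {f : (Fin k → ℕ) → C} {G G' : ℕ → ℕ}
    (h : IsHomogeneousAlong f G) (hG' : StrictMono G') : IsHomogeneousAlong f (G ∘ G') :=
  fun i j hi hj => h (G' ∘ i) (G' ∘ j) (hG'.comp hi) (hG'.comp hj)

def IsEndHomogeneousAlong {r : ℕ} (f : (Fin (r + 1) → ℕ) → C) (n : ℕ → ℕ) : Prop :=
  ∀ i j : Fin (r + 1) → ℕ, StrictMono i → StrictMono j → i 0 = j 0 → f (n ∘ i) = f (n ∘ j)

theorem IsEndHomogeneousAlong.exists_isHomogeneousAlong [Finite C] {r : ℕ}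
    {f : (Fin (r + 1) → ℕ) → C} {n : ℕ → ℕ} (hn : StrictMono n) (hf : IsEndHomogeneousAlong f n) :
    ∃ G, StrictMono G ∧ IsHomogeneousAlong f G := by
  -- pigeonhole: infinitely many first entries `k` give the same colour `c₀`
  obtain ⟨c₀, hc₀⟩ := Finite.exists_infinite_fiber fun k => f (n ∘ fun v : Fin (r + 1) => k + v)
  let p : ℕ → Prop := fun k => f (n ∘ fun v : Fin (r + 1) => k + v) = c₀
  have hp : (Set.ofPred p).Infinite := Set.infinite_coe_iff.mp hc₀
  have hcolour : ∀ i : Fin (r + 1) → ℕ, StrictMono i → f ((n ∘ Nat.nth p) ∘ i) = c₀ := by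
    intro i hi
    rw [Function.comp_assoc, hf _ (fun v => Nat.nth p (i 0) + v)
      ((Nat.nth_strictMono hp).comp hi) (fun _ _ h => Nat.add_lt_add_left h _) (by simp)]
    exact Nat.nth_mem_of_infinite hp _
  exact ⟨n ∘ Nat.nth p, hn.comp (Nat.nth_strictMono hp),
    fun i j hi hj => (hcolour i hi).trans (hcolour j hj).symm⟩

theorem exists_strictMono_isEndHomogeneousAlong {r : ℕ}
    (ih : ∀ f' : (Fin r → ℕ) → C, ∃ G, StrictMono G ∧ IsHomogeneousAlong f' G)
    (f : (Fin (r + 1) → ℕ) → C) :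
    ∃ n : ℕ → ℕ, StrictMono n ∧ IsEndHomogeneousAlong f n := by
  choose G₀ hG₀ hG₀hom using ih
  let tail : (ℕ → ℕ) → (Fin r → ℕ) → C := fun e t => f (Fin.cons (e 0) (e ∘ Nat.succ ∘ t))
  -- `F (k + 1)` thins out `F k ∘ succ` so that `tail (F k)` becomes homogeneous
  let F : ℕ → ℕ → ℕ := fun k => Nat.rec id (fun _ e => e ∘ Nat.succ ∘ G₀ (tail e)) k
  have hF_succ : ∀ k, F (k + 1) = F k ∘ Nat.succ ∘ G₀ (tail (F k)) := fun _ => rfl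
  have hF_mono : ∀ k, StrictMono (F k) := by
    intro k
    induction k with
    | zero => exact strictMono_id
    | succ k ih =>
      rw [hF_succ]
      exact ih.comp (StrictMono.comp (g := Nat.succ) (fun _ _ => Nat.succ_lt_succ) (hG₀ _))
  have hF_range : ∀ k l, k ≤ l → range (F l) ⊆ range (F k) := by
    intro k l hkl
    induction hkl with
    | refl => rfl
    | step _ ih => rw [hF_succ]; exact (range_comp_subset_range _ _).trans ih
  have hn : StrictMono fun k => F k 0 := strictMono_nat_of_lt_succ fun k => by
    rw [hF_succ]
    exact hF_mono k (Nat.succ_pos _)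
  refine ⟨fun k => F k 0, hn, fun i j hi hj h0 => ?_⟩
  suffices key : ∀ i : Fin (r + 1) → ℕ, StrictMono i → f ((fun k => F k 0) ∘ i) =
      tail (F (i 0)) (G₀ (tail (F (i 0))) ∘ fun v : Fin r => (v : ℕ)) by
    rw [key i hi, key j hj, h0]
  intro i hi
  have hmem : ∀ v : Fin r, F (i v.succ) 0 ∈ range (F (i 0 + 1)) :=
    fun v => hF_range _ _ (hi (Fin.succ_pos v)) (mem_range_self 0)
  choose t ht using hmem
  have ht_mono : StrictMono t := fun a b hab => (hF_mono (i 0 + 1)).lt_iff_lt.mp <| by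
    rw [ht, ht]
    exact hn (hi (Fin.succ_lt_succ_iff.mpr hab))
  calc f ((fun k => F k 0) ∘ i) = tail (F (i 0)) (G₀ (tail (F (i 0))) ∘ t) := by
        refine congrArg f (funext fun w => Fin.cases rfl (fun v => ?_) w)
        show F (i v.succ) 0 = F (i 0) (G₀ (tail (F (i 0))) (t v)).succ
        rw [← ht, hF_succ]
        rfl
    _ = _ := hG₀hom _ t _ ht_mono fun _ _ h => h

theorem exists_strictMono_isHomogeneousAlong [Finite C] :
    ∀ {r : ℕ} (f : (Fin r → ℕ) → C), ∃ G, StrictMono G ∧ IsHomogeneousAlong f G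
  | 0, f => ⟨id, strictMono_id, fun _ _ _ _ => congrArg f (Subsingleton.elim _ _)⟩
  | _ + 1, f =>
    let ⟨_, hn, hf⟩ :=
      exists_strictMono_isEndHomogeneousAlong (fun f' => exists_strictMono_isHomogeneousAlong f') f
    hf.exists_isHomogeneousAlong hn

theorem exists_strictMono_forall_isHomogeneousAlong [Finite C] {ι : Type*} (s : Finset ι)
    {k : ι → ℕ} (f : ∀ x, (Fin (k x) → ℕ) → C) :
    ∃ G, StrictMono G ∧ ∀ x ∈ s, IsHomogeneousAlong (f x) G := by
  classical
  induction s using Finset.induction_on with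
  | empty => exact ⟨id, strictMono_id, by simp⟩
  | insert x s _ ih =>
    obtain ⟨G, hG, hGs⟩ := ih
    obtain ⟨G', hG', hG'x⟩ := exists_strictMono_isHomogeneousAlong fun σ => f x (G ∘ σ)
    exact ⟨G ∘ G', hG.comp hG',
      (Finset.forall_mem_insert _ _ _).mpr ⟨hG'x, fun y hy => (hGs y hy).comp hG'⟩⟩

end Ramsey

section Formulas

variable {L : Language} {M : Type*} [L.Structure M] {α β : Type*}

def slotToFresh : (α ⊕ Fin 1) ⊕ β → (α ⊕ β) ⊕ Fin 1 :=
  Sum.elim (Sum.elim (Sum.inl ∘ Sum.inl) Sum.inr) (Sum.inl ∘ Sum.inr)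

noncomputable def existsUniqueSlot (φ : L.Formula ((α ⊕ Fin 1) ⊕ β)) :
    L.Formula ((α ⊕ Fin 1) ⊕ β) :=
  ((φ.relabel slotToFresh).iExsUnique (Fin 1)).relabel (Sum.map Sum.inl id)

theorem realize_existsUniqueSlot (φ : L.Formula ((α ⊕ Fin 1) ⊕ β)) (x : α → M) (y : M)
    (c : β → M) :
    (existsUniqueSlot φ).Realize (Sum.elim (Sum.elim x fun _ => y) c) ↔
      ∃! z, φ.Realize (Sum.elim (Sum.elim x fun _ => z) c) := by
  have hval : Sum.elim (Sum.elim x fun _ : Fin 1 => y) c ∘ Sum.map Sum.inl id = Sum.elim x c := by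
    ext (_ | _) <;> rfl
  rw [existsUniqueSlot, Formula.realize_relabel, hval, Formula.realize_iExsUnique]
  refine (Equiv.funUnique (Fin 1) M).existsUnique_congr fun w => ?_
  rw [Formula.realize_relabel]
  exact iff_of_eq (congrArg _ (by ext ((_ | k) | _) <;> simp [slotToFresh, Fin.fin_one_eq_zero]))

noncomputable def uniqueSolution (φ : L.Formula ((α ⊕ Fin 1) ⊕ β)) :
    L.Formula ((α ⊕ Fin 1) ⊕ β) :=
  φ ⊓ existsUniqueSlot φ

theorem realize_uniqueSolution (φ : L.Formula ((α ⊕ Fin 1) ⊕ β)) (x : α → M) (y : M)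
    (c : β → M) :
    (uniqueSolution φ).Realize (Sum.elim (Sum.elim x fun _ => y) c) ↔
      ∀ z, φ.Realize (Sum.elim (Sum.elim x fun _ => z) c) ↔ z = y := by
  rw [uniqueSolution, Formula.realize_inf, realize_existsUniqueSlot]
  exact ⟨fun ⟨hy, huniq⟩ z => ⟨fun hz => huniq.unique hz hy, fun h => h ▸ hy⟩,
    fun h => ⟨(h y).2 rfl, y, (h y).2 rfl, fun z => (h z).1⟩⟩

theorem exists_graph_formula_eq_of_unique (φ : L.Formula ((α ⊕ Fin 1) ⊕ β)) (c : β → M) (j₀ : β) :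
    ∃ (f : (α → M) → M) (ψ : L.Formula ((α ⊕ Fin 1) ⊕ β)),
      (∀ x y, f x = y ↔ ψ.Realize (Sum.elim (Sum.elim x fun _ => y) c)) ∧
      ∀ x y, (∀ z, φ.Realize (Sum.elim (Sum.elim x fun _ => z) c) ↔ z = y) → f x = y := by
  classical
  let f : (α → M) → M := fun x =>
    if h : ∃! y, φ.Realize (Sum.elim (Sum.elim x fun _ => y) c) then h.exists.choose else c j₀
  have hf : ∀ x y, (∀ z, φ.Realize (Sum.elim (Sum.elim x fun _ => z) c) ↔ z = y) → f x = y :=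
    fun x y hy => by
      have h : ∃! y, φ.Realize (Sum.elim (Sum.elim x fun _ => y) c) :=
        ⟨y, (hy y).2 rfl, fun z => (hy z).1⟩
      simp only [f, dif_pos h]
      exact (hy _).1 h.exists.choose_spec
  refine ⟨f, uniqueSolution φ ⊔ ((existsUniqueSlot φ).not ⊓
    Term.equal (Term.var (Sum.inl (Sum.inr 0))) (Term.var (Sum.inr j₀))), fun x y => ?_, hf⟩
  simp only [Formula.realize_sup, Formula.realize_inf, Formula.realize_not,
    realize_uniqueSolution, realize_existsUniqueSlot, Formula.realize_equal, Term.realize_var,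
    Sum.elim_inl, Sum.elim_inr]
  by_cases h : ∃! y, φ.Realize (Sum.elim (Sum.elim x fun _ => y) c)
  · have hy₀ := h.exists.choose_spec
    rw [show f x = h.exists.choose from dif_pos h]
    simp only [h, not_true_eq_false, false_and, or_false]
    refine ⟨?_, fun hy => (hy _).1 hy₀⟩
    rintro rfl z
    exact ⟨fun hz => h.unique hz hy₀, fun e => e ▸ hy₀⟩
  · have hno : ¬∀ z, φ.Realize (Sum.elim (Sum.elim x fun _ => z) c) ↔ z = y :=
      fun hy => h ⟨y, (hy y).2 rfl, fun z => (hy z).1⟩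
    rw [show f x = c j₀ from dif_neg h]
    simp only [hno, h, not_false_eq_true, true_and, false_or]
    exact eq_comm

theorem exists_formula_of_mem_dclIn_union {B : Set M} (c : β → M) {x : M}
    (hx : x ∈ dclIn L M (B ∪ range c)) :
    ∃ (m : ℕ) (u : Fin m → M) (φ : L.Formula ((Fin m ⊕ Fin 1) ⊕ β)),
      (∀ t, u t ∈ B) ∧ ∀ y, φ.Realize (Sum.elim (Sum.elim u fun _ => y) c) ↔ y = x := by
  classical
  obtain ⟨χ, hχ, huniq⟩ := hx
  -- the parameters of `χ` that are not values of `c` lie in `B` and become the tuple `u`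
  let S : Finset ↥(B ∪ range c) := χ.freeVarFinset.toLeft.filter fun p => (p : M) ∉ range c
  let e := S.equivFin
  let ρ : χ.freeVarFinset → (Fin S.card ⊕ Fin 1) ⊕ β
    | ⟨Sum.inl p, hp⟩ =>
      if h : (p : M) ∈ range c then Sum.inr h.choose
      else Sum.inl (Sum.inl (e ⟨p, Finset.mem_filter.mpr ⟨Finset.mem_toLeft.mpr hp, h⟩⟩))
    | ⟨Sum.inr k, _⟩ => Sum.inl (Sum.inr k)
  refine ⟨S.card, fun t => (e.symm t : ↥(B ∪ range c)), χ.restrictFreeVar ρ, fun t => ?_,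
    fun y => ?_⟩
  · exact (e.symm t).1.2.resolve_right (Finset.mem_filter.mp (e.symm t).2).2
  · rw [Formula.Realize, BoundedFormula.realize_restrictFreeVar (Sum.elim Subtype.val fun _ => y)]
    · exact ⟨huniq y, fun h => h ▸ hχ⟩
    · rintro ⟨p | k, hp⟩
      · by_cases h : (p : M) ∈ range c
        · dsimp only [ρ]
          rw [dif_pos h]
          exact h.choose_spec
        · dsimp only [ρ]
          rw [dif_neg h]
          simp
      · rfl

end Formulas

section Indiscernibles

variable {L : Language} {M : Type*} [L.Structure M]

theorem strictMono_append_add {q k : ℕ} {i : Fin k → ℕ} (hi : StrictMono i) :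
    StrictMono (Fin.append (fun j : Fin q => (j : ℕ)) fun v => i v + q) := by
  intro w₁ w₂ h
  induction w₁ using Fin.addCases with
  | left j₁ => induction w₂ using Fin.addCases with
    | left j₂ => simpa using Fin.lt_def.mp h
    | right v₂ => simp only [Fin.append_left, Fin.append_right]; omega
  | right v₁ => induction w₂ using Fin.addCases with
    | left j₂ => simp only [Fin.lt_def, Fin.val_natAdd, Fin.val_castAdd] at h; omega
    | right v₂ => simpa using hi (by simpa using h)

theorem IsIndiscernible.isIndiscernibleOver_shift {a : ℕ → M}
    (ha : IsIndiscernible L fun i (_ : Fin 1) => a i) (q : ℕ) :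
    IsIndiscernibleOver L (fun n (_ : Fin 1) => a (n + q)) fun j : Fin q => a j := by
  intro k φ i j hi hj
  let σ : (Fin k × Fin 1) ⊕ Fin q → Fin (q + k) × Fin 1 :=
    Sum.elim (fun v => (Fin.natAdd q v.1, 0)) fun j => (Fin.castAdd k j, 0)
  have key : ∀ i : Fin k → ℕ, φ.Realize (Sum.elim (fun v => a (i v.1 + q)) fun j : Fin q => a j) ↔
      (φ.relabel σ).Realize fun w =>
        a (Fin.append (fun j : Fin q => (j : ℕ)) (fun v => i v + q) w.1) := fun i => by
    rw [Formula.realize_relabel]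
    exact iff_of_eq (congrArg _ (by ext (_ | _) <;> simp [σ]))
  rw [key, key]
  exact ha _ _ _ _ (strictMono_append_add hi) (strictMono_append_add hj)

variable {m p q : ℕ} {c : ℕ → Fin p → M} {b : Fin q → M}

theorem IsIndiscernibleOver.exists_realize_iff {γ : Type*} [Finite γ]
    (hc : IsIndiscernibleOver L c b) {k : ℕ} (φ : L.Formula (((Fin k × Fin p) ⊕ Fin q) ⊕ γ))
    {i j : Fin k → ℕ} (hi : StrictMono i) (hj : StrictMono j) :
    (∃ w : γ → M, φ.Realize (Sum.elim (Sum.elim (fun v => c (i v.1) v.2) b) w)) ↔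
      ∃ w : γ → M, φ.Realize (Sum.elim (Sum.elim (fun v => c (j v.1) v.2) b) w) := by
  simpa only [Formula.realize_iExs] using hc k (φ.iExs γ) i j hi hj

noncomputable def approxFormula (Φ : L.Formula ((Fin m ⊕ Fin p) ⊕ Fin q)) (N : ℕ)
    (Ψ : Finset (Σ k, L.Formula (Fin k × Fin m))) :
    L.Formula (((Fin N × Fin p) ⊕ Fin q) ⊕ (Fin N × Fin m)) :=
  (Formula.iInf fun n : Fin N => Φ.relabel <|
    Sum.elim (Sum.elim (fun t => Sum.inr (n, t)) fun s => Sum.inl (Sum.inl (n, s)))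
      fun j => Sum.inl (Sum.inr j)) ⊓
  Formula.iInf fun ψ : Ψ => Formula.iInf fun ij : {ij : (Fin ψ.1.1 → Fin N) × (Fin ψ.1.1 → Fin N) //
      StrictMono ij.1 ∧ StrictMono ij.2} =>
    (ψ.1.2.relabel fun w => Sum.inr (ij.1.1 w.1, w.2)).iff
      (ψ.1.2.relabel fun w => Sum.inr (ij.1.2 w.1, w.2))

theorem realize_approxFormula (Φ : L.Formula ((Fin m ⊕ Fin p) ⊕ Fin q)) {N : ℕ}
    (Ψ : Finset (Σ k, L.Formula (Fin k × Fin m))) (I : Fin N → ℕ) (x : Fin N → Fin m → M) :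
    (approxFormula Φ N Ψ).Realize
        (Sum.elim (Sum.elim (fun v => c (I v.1) v.2) b) fun w => x w.1 w.2) ↔
      (∀ n, Φ.Realize (Sum.elim (Sum.elim (x n) (c (I n))) b)) ∧
      ∀ ψ ∈ Ψ, ∀ i j : Fin ψ.1 → Fin N, StrictMono i → StrictMono j →
        (ψ.2.Realize (fun w => x (i w.1) w.2) ↔ ψ.2.Realize (fun w => x (j w.1) w.2)) := by
  simp only [approxFormula, Formula.realize_inf, Formula.realize_iInf, Formula.realize_iff,
    Formula.realize_relabel]
  refine and_congr (forall_congr' fun n => iff_of_eq (congrArg _ ?_)) ?_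
  · ext ((_ | _) | _) <;> rfl
  · exact ⟨fun h ψ hψ i j hi hj => h ⟨ψ, hψ⟩ ⟨(i, j), hi, hj⟩,
      fun h ψ ij => h ψ.1 ψ.2 _ _ ij.2.1 ij.2.2⟩

theorem IsIndiscernibleOver.forall_exists_realize (hc : IsIndiscernibleOver L c b)
    (Φ : L.Formula ((Fin m ⊕ Fin p) ⊕ Fin q)) {n₀ : ℕ} {x₀ : Fin m → M}
    (h₀ : Φ.Realize (Sum.elim (Sum.elim x₀ (c n₀)) b)) (n : ℕ) :
    ∃ x : Fin m → M, Φ.Realize (Sum.elim (Sum.elim x (c n)) b) := by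
  let ρ : (Fin m ⊕ Fin p) ⊕ Fin q → ((Fin 1 × Fin p) ⊕ Fin q) ⊕ Fin m :=
    Sum.elim (Sum.elim Sum.inr fun s => Sum.inl (Sum.inl (0, s))) (Sum.inl ∘ Sum.inr)
  have hex : ∀ n', (∃ x, Φ.Realize (Sum.elim (Sum.elim x (c n')) b)) ↔
      ∃ x : Fin m → M, (Φ.relabel ρ).Realize
        (Sum.elim (Sum.elim (fun v : Fin 1 × Fin p => c ((fun _ => n') v.1) v.2) b) x) :=
    fun n' => exists_congr fun x => by
      rw [Formula.realize_relabel]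
      exact iff_of_eq (congrArg _ (by ext ((_ | _) | _) <;> rfl))
  exact (hex n).2 ((hc.exists_realize_iff (Φ.relabel ρ) (Subsingleton.strictMono fun _ => n₀)
    (Subsingleton.strictMono fun _ => n)).1 ((hex n₀).1 ⟨x₀, h₀⟩))

/-- The finite fragments, indexed by `N` and `Ψ`, of the type of the sequence we construct. -/
def IsApprox (Φ : L.Formula ((Fin m ⊕ Fin p) ⊕ Fin q)) (c : ℕ → Fin p → M) (b : Fin q → M)
    (N : ℕ) (Ψ : Finset (Σ k, L.Formula (Fin k × Fin m))) (g : ℕ → Fin m → M) : Prop :=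
  (∀ n < N, Φ.Realize (Sum.elim (Sum.elim (g n) (c n)) b)) ∧
  ∀ ψ ∈ Ψ, ∀ i j : Fin ψ.1 → ℕ, StrictMono i → StrictMono j → (∀ v, i v < N) → (∀ v, j v < N) →
    (ψ.2.Realize (fun w => g (i w.1) w.2) ↔ ψ.2.Realize (fun w => g (j w.1) w.2))

theorem IsApprox.mono {Φ : L.Formula ((Fin m ⊕ Fin p) ⊕ Fin q)} {N N' : ℕ}
    {Ψ Ψ' : Finset (Σ k, L.Formula (Fin k × Fin m))} {g : ℕ → Fin m → M}
    (h : IsApprox Φ c b N Ψ g) (hN : N' ≤ N) (hΨ : Ψ' ⊆ Ψ) : IsApprox Φ c b N' Ψ' g :=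
  ⟨fun n hn => h.1 n (hn.trans_le hN), fun ψ hψ i j hi hj hiN hjN =>
    h.2 ψ (hΨ hψ) i j hi hj (fun v => (hiN v).trans_le hN) fun v => (hjN v).trans_le hN⟩

theorem IsIndiscernibleOver.exists_isApprox (hc : IsIndiscernibleOver L c b)
    {Φ : L.Formula ((Fin m ⊕ Fin p) ⊕ Fin q)} {H : ℕ → Fin m → M}
    (hH : ∀ n, Φ.Realize (Sum.elim (Sum.elim (H n) (c n)) b)) (N : ℕ)
    (Ψ : Finset (Σ k, L.Formula (Fin k × Fin m))) :
    ∃ g, IsApprox Φ c b N Ψ g := by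
  -- by Ramsey, some subsequence `H ∘ G` is indiscernible for `Ψ`; transfer from `c ∘ G` to `c`
  obtain ⟨G, hG, hhom⟩ := exists_strictMono_forall_isHomogeneousAlong Ψ
    fun ψ σ => ψ.2.Realize fun w => H (σ w.1) w.2
  have hGN : (approxFormula Φ N Ψ).Realize (Sum.elim
      (Sum.elim (fun v => c ((G ∘ Fin.val) v.1) v.2) b) fun w => H (G w.1) w.2) :=
    (realize_approxFormula Φ Ψ _ _).2 ⟨fun n => hH _, fun ψ hψ i j hi hj =>
      iff_of_eq (hhom ψ hψ _ _ (Fin.val_strictMono.comp hi) (Fin.val_strictMono.comp hj))⟩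
  obtain ⟨w, hw⟩ := (hc.exists_realize_iff _ (hG.comp Fin.val_strictMono)
    Fin.val_strictMono).1 ⟨_, hGN⟩
  obtain ⟨hwΦ, hwΨ⟩ := (realize_approxFormula Φ Ψ Fin.val fun n t => w (n, t)).1 hw
  refine ⟨fun n => if h : n < N then fun t => w (⟨n, h⟩, t) else H n,
    fun n hn => by simpa [dif_pos hn] using hwΦ ⟨n, hn⟩, fun ψ hψ i j hi hj hiN hjN => ?_⟩
  simpa [dif_pos (hiN _), dif_pos (hjN _)] using
    hwΨ ψ hψ (fun v => ⟨i v, hiN v⟩) (fun v => ⟨j v, hjN v⟩) hi hj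

end Indiscernibles

section Saturation

variable {L : FirstOrder.Language.{0, 0}} {M : Type} [L.Structure M] {κ : Cardinal.{0}}

theorem IsSaturated.exists_realize {α P : Type} (hsat : IsSaturated L M κ) (hα : #α < κ)
    (hP : #P < κ) (e : P → M) (S : Set (L.Formula (α ⊕ P)))
    (hS : ∀ s : Finset (L.Formula (α ⊕ P)), ↑s ⊆ S →
      ∃ v : α → M, ∀ φ ∈ s, φ.Realize (Sum.elim v e)) :
    ∃ v : α → M, ∀ φ ∈ S, φ.Realize (Sum.elim v e) := by
  classical
  let r : α ⊕ P → α ⊕ range e := Sum.map id (rangeFactorization e)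
  have hr : ∀ (v : α → M) (φ : L.Formula (α ⊕ P)),
      (φ.relabel r).Realize (Sum.elim v Subtype.val) ↔ φ.Realize (Sum.elim v e) := fun v φ => by
    rw [Formula.realize_relabel]
    exact iff_of_eq (congrArg _ (by ext (_ | _) <;> rfl))
  obtain ⟨v, hv⟩ := hsat α hα (range e) (mk_range_le.trans_lt hP) (Formula.relabel r '' S)
    fun s hs => by
      obtain ⟨s', hs'S, rfl⟩ := Finset.subset_set_image_iff.mp hs
      obtain ⟨v, hv⟩ := hS s' hs'S
      exact ⟨v, by simpa [hr] using hv⟩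
  exact ⟨v, fun φ hφ => (hr v φ).1 (hv _ (mem_image_of_mem _ hφ))⟩

variable {m p q : ℕ} {c : ℕ → Fin p → M} {b : Fin q → M}

theorem IsIndiscernibleOver.exists_isIndiscernible_realize (hκ : ℵ₀ < κ)
    (hsat : IsSaturated L M κ) (hc : IsIndiscernibleOver L c b)
    (Φ : L.Formula ((Fin m ⊕ Fin p) ⊕ Fin q)) {n₀ : ℕ} {x₀ : Fin m → M}
    (h₀ : Φ.Realize (Sum.elim (Sum.elim x₀ (c n₀)) b)) :
    ∃ g : ℕ → Fin m → M, IsIndiscernible L g ∧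
      ∀ n, Φ.Realize (Sum.elim (Sum.elim (g n) (c n)) b) := by
  classical
  choose H hH using hc.forall_exists_realize Φ h₀
  let e : (ℕ × Fin p) ⊕ Fin q → M := Sum.elim (fun w => c w.1 w.2) b
  let T : ℕ × Finset (Σ k, L.Formula (Fin k × Fin m)) →
      Set (L.Formula ((ℕ × Fin m) ⊕ ((ℕ × Fin p) ⊕ Fin q))) := fun idx =>
    {φ | ∀ g, IsApprox Φ c b idx.1 idx.2 g → φ.Realize (Sum.elim (fun w => g w.1 w.2) e)}
  have hT : Monotone T := fun idx idx' h φ hφ g hg => hφ g (hg.mono h.1 h.2)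
  obtain ⟨v, hv⟩ := hsat.exists_realize (mk_le_aleph0.trans_lt hκ) (mk_le_aleph0.trans_lt hκ) e
    (⋃ idx, T idx) fun s hs => by
      obtain ⟨idx, hidx⟩ := hT.directed_le.exists_mem_subset_of_finset_subset_biUnion hs
      obtain ⟨g, hg⟩ := hc.exists_isApprox hH idx.1 idx.2
      exact ⟨fun w => g w.1 w.2, fun φ hφ => hidx hφ g hg⟩
  have hΦ : ∀ (g : ℕ → Fin m → M) n, (Φ.relabel (Sum.elim (Sum.elim (fun t => Sum.inl (n, t))
      fun s => Sum.inr (Sum.inl (n, s))) fun j => Sum.inr (Sum.inr j))).Realize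
        (Sum.elim (fun w => g w.1 w.2) e) ↔ Φ.Realize (Sum.elim (Sum.elim (g n) (c n)) b) :=
    fun g n => by
      rw [Formula.realize_relabel]
      exact iff_of_eq (congrArg _ (by ext ((_ | _) | _) <;> rfl))
  refine ⟨fun n t => v (n, t), fun k ψ i j hi hj => ?_, fun n => ?_⟩
  · let χ : L.Formula ((ℕ × Fin m) ⊕ ((ℕ × Fin p) ⊕ Fin q)) :=
      (ψ.relabel fun w => Sum.inl (i w.1, w.2)).iff (ψ.relabel fun w => Sum.inl (j w.1, w.2))
    have hχ : ∀ g : ℕ → Fin m → M, χ.Realize (Sum.elim (fun w => g w.1 w.2) e) ↔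
        (ψ.Realize (fun w => g (i w.1) w.2) ↔ ψ.Realize (fun w => g (j w.1) w.2)) := fun g => by
      simp only [χ, Formula.realize_iff, Formula.realize_relabel, Function.comp_def, Sum.elim_inl]
    obtain ⟨N, hN⟩ := Finite.exists_le fun w => max (i w) (j w)
    refine (hχ fun n t => v (n, t)).1 (hv χ (mem_iUnion.2 ⟨(N + 1, {⟨k, ψ⟩}), fun g hg =>
      (hχ g).2 (hg.2 ⟨k, ψ⟩ (Finset.mem_singleton_self _) i j hi hj (fun w => ?_) fun w => ?_)⟩))
    · exact Nat.lt_succ_of_le ((le_max_left _ _).trans (hN w))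
    · exact Nat.lt_succ_of_le ((le_max_right _ _).trans (hN w))
  · exact (hΦ (fun n t => v (n, t)) n).1 (hv _ (mem_iUnion.2 ⟨(n + 1, ∅), fun g hg =>
      (hΦ g n).2 (hg.1 n n.lt_succ_self)⟩))

end Saturation

section LU

variable {L : FirstOrder.Language.{0, 0}} {M : Type*} [L.Structure M] {α : Type*}

def relU (x : α) : (LU L).Formula α :=
  Relations.formula (Sum.inr PUnit.unit : (LU L).Relations 1) ![Term.var x]

def onLU (φ : L.Formula α) : (LU L).Formula α :=
  LHom.sumInl.onFormula φ

theorem realize_relU (B : Set M) (x : α) (v : α → M) :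
    @Formula.Realize _ M (LUStructure L M B) _ (relU x) v ↔ v x ∈ B :=
  Iff.rfl

theorem realize_onLU (B : Set M) (φ : L.Formula α) (v : α → M) :
    @Formula.Realize _ M (LUStructure L M B) _ (onLU φ) v ↔ φ.Realize v :=
  @LHom.realize_onFormula L (LU L) M _ α (LUStructure L M B) LHom.sumInl
    (@LHom.sumInl_isExpansionOn L unaryRelLang M _ (unaryRelStructure M B)) φ v

end LU

/-- Proposition 2.4 of "Dependent Pairs": if `(aᵢ)` is an indiscernible
sequence in a sufficiently saturated model `M` of an `L(U)`-theory and some `aᵢ` lies in the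
`L`-definable closure of `U(M) ∪ {a₀, …, a_{i₀}}` for some `i₀ < i`, then there are a function
`f : Mᵐ → M` whose graph is definable in `M` over `a₀, …, a_{i₀}` and an indiscernible
sequence `(g⃗ᵢ)_{i > i₀}` of tuples from `U(M)ᵐ` with `f(g⃗ᵢ) = aᵢ`. -/
theorem statement_2 (L : FirstOrder.Language.{0, 0}) (M : Type) [L.Structure M]
    (B : Set M) :
    letI : (LU L).Structure M := LUStructure L M B
    ∀ (T_U : (LU L).Theory) (_ : T_U.Model M)
      (κ : Cardinal.{0}) (_ : (LU L).card + Cardinal.aleph0 < κ)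
      (_ : IsSaturated (LU L) M κ)
      (a : ℕ → M)
      (_ : IsIndiscernible (LU L) (fun i (_ : Fin 1) => a i))
      (i₀ i : ℕ), i₀ < i →
      a i ∈ dclIn L M (B ∪ a '' Set.Iic i₀) →
      ∃ (m : ℕ) (f : (Fin m → M) → M),
        (∃ φ : (LU L).Formula ((Fin m ⊕ Fin 1) ⊕ Fin (i₀ + 1)),
          ∀ (x : Fin m → M) (y : M),
            f x = y ↔ φ.Realize (Sum.elim (Sum.elim x fun _ => y) fun j => a j)) ∧
        ∃ g : ℕ → Fin m → M,
          IsIndiscernible (LU L) g ∧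
          ∀ i' : ℕ, (∀ t : Fin m, g i' t ∈ B) ∧ f (g i') = a (i' + i₀ + 1) := by
  let instLU : (LU L).Structure M := LUStructure L M B
  intro _ _ κ hκ hsat a ha i₀ i hi hdcl
  have hprefix : a '' Iic i₀ = range fun j : Fin (i₀ + 1) => a j := by
    ext
    simp [Fin.exists_iff]
  rw [hprefix] at hdcl
  obtain ⟨m, u, φ, hu, hφ⟩ := exists_formula_of_mem_dclIn_union _ hdcl
  obtain ⟨f, ψ, hf, hfφ⟩ := exists_graph_formula_eq_of_unique φ (fun j : Fin (i₀ + 1) => a j) 0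
  let Φ : (LU L).Formula ((Fin m ⊕ Fin 1) ⊕ Fin (i₀ + 1)) :=
    (Formula.iInf fun t => relU (Sum.inl (Sum.inl t))) ⊓ onLU (uniqueSolution φ)
  have hΦ : ∀ x y, Φ.Realize (Sum.elim (Sum.elim x fun _ => y) fun j => a j) ↔ (∀ t, x t ∈ B) ∧
      ∀ z, φ.Realize (Sum.elim (Sum.elim x fun _ => z) fun j => a j) ↔ z = y := fun x y => by
    simp only [Φ, instLU, Formula.realize_inf, Formula.realize_iInf, realize_relU, realize_onLU,
      realize_uniqueSolution, Sum.elim_inl]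
  obtain ⟨g, hg, hgΦ⟩ := (ha.isIndiscernibleOver_shift (i₀ + 1)).exists_isIndiscernible_realize
    ((self_le_add_left _ _).trans_lt hκ) hsat Φ (n₀ := i - (i₀ + 1))
    ((hΦ u _).2 ⟨hu, by rwa [Nat.sub_add_cancel hi]⟩)
  refine ⟨m, f, ⟨onLU ψ, fun x y => (hf x y).trans (realize_onLU B ψ _).symm⟩,
    g, hg, fun n => ?_⟩
  obtain ⟨hgB, hgφ⟩ := (hΦ _ _).1 (hgΦ n)
  exact ⟨hgB, hfφ _ _ hgφ⟩

end PaperDep
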